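/- Let h : ℕ → ℕ be monotone inflationary, a, b, c ≥ 1 and x₀ ≥ 0 natural numbers, and H(x) = x+1. If h(x) ≤ H^{ω^b·c}(x) for all x ≥ x₀, then h^{ω^a}(x) ≤ H^{ω^{b+a}}((c+1)·x) for all x ≥ max{2c, x₀}. -/

import Mathlib

/-!
`HardyRel` is functional, since the indices of its four clauses never overlap and
`β + ω^(k+1)` with `ω^(k+1) ∣ β` determines `β` and `k`. Along `ω^k` it is computed by
`hardyOmegaPow`, where
`h^(ω^(k+1))(x) = (h^(ω^k))^[x+1](x)`; so everything reduces to inequalities between iterates.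
Write `S k` for `H^(ω^k)`. For `a = 1`, domination of `h` by `(S b)^[c]` from `x₀` on gives
`h^ω(x) = h^[x+1](x) ≤ (S b)^[c(x+1)](x) ≤ (S b)^[(c+1)x+1]((c+1)x) = S (b+1) ((c+1)x)`
as soon as `c ≤ x`. For the step `a → a+1`, every application of `h^(ω^a)` is bounded by one of
`S (b+a)` after multiplying the argument by `c+1`, and since `S (b+a)` at least doubles its
argument, `c` further applications of it absorb that factor; so `(h^(ω^a))^[x+1](x)` is bounded by
`(S (b+a))^[(c+1)x+1]((c+1)x) = S (b+a+1) ((c+1)x)`.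
-/

open Ordinal

/-- The graph of the Hardy hierarchy `h^α` for ordinals `α ≤ ω^ω`, defined with
the standard fundamental sequences `(ω^ω)(x) = ω^(x+1)` and
`(β + ω^(k+1))(x) = β + ω^k·(x+1)` (for `β + ω^(k+1)` in Cantor Normal Form,
i.e. `ω^(k+1) ∣ β`).  `HardyRel h α x y` means `h^α(x) = y`. -/
inductive HardyRel (h : ℕ → ℕ) : Ordinal → ℕ → ℕ → Prop
  | zero (x : ℕ) : HardyRel h 0 x x
  | succ (α : Ordinal) (x y : ℕ) : HardyRel h α (h x) y → HardyRel h (α + 1) x y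
  | top (x y : ℕ) : HardyRel h (omega0 ^ (x + 1 : ℕ)) x y →
      HardyRel h (omega0 ^ omega0) x y
  | limit (β : Ordinal) (k x y : ℕ) : omega0 ^ (k + 1) ∣ β →
      HardyRel h (β + omega0 ^ k * ((x + 1 : ℕ) : Ordinal)) x y →
      HardyRel h (β + omega0 ^ (k + 1)) x y


universe u

open Order Function

lemma isSuccLimit_omega0_pow {n : ℕ} (hn : n ≠ 0) : IsSuccLimit (ω ^ n) := by
  rw [← opow_natCast]
  exact isSuccLimit_opow_left isSuccLimit_omega0 (mod_cast hn)

lemma isSuccLimit_omega0_opow_omega0 : IsSuccLimit (ω ^ ω) :=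
  isSuccLimit_opow one_lt_omega0 isSuccLimit_omega0

lemma isSuccLimit_add_omega0_pow_succ (β : Ordinal) (k : ℕ) : IsSuccLimit (β + ω ^ (k + 1)) :=
  isSuccLimit_add β (isSuccLimit_omega0_pow k.succ_ne_zero)

lemma add_one_ne_of_isSuccLimit {o : Ordinal} (ho : IsSuccLimit o) (α : Ordinal) : α + 1 ≠ o := by
  rw [← succ_eq_add_one]
  exact ho.succ_ne α

lemma add_omega0_pow_succ_ne_omega0_opow_omega0 (β : Ordinal) (k : ℕ) :
    β + ω ^ (k + 1) ≠ ω ^ ω := by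
  intro e
  have hβ : β < ω ^ ω := e ▸ lt_add_of_pos_right β (pow_pos omega0_pos _)
  have hk : ω ^ (k + 1) < ω ^ ω := by
    rw [← opow_natCast]
    exact (opow_lt_opow_iff_right one_lt_omega0).2 (natCast_lt_omega0 _)
  exact (isPrincipal_add_omega0_opow ω hβ hk).ne e

lemma omega0_pow_mul_add_one_ne {m n : ℕ} (hmn : m < n) (γ δ : Ordinal) :
    ω ^ m * (γ + 1) ≠ ω ^ n * (δ + 1) := by
  obtain ⟨d, rfl⟩ := Nat.exists_eq_add_of_lt hmn
  rw [add_assoc, pow_add, mul_assoc, Ne, mul_left_cancel_iff_of_pos (pow_pos omega0_pos _),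
    mul_add_one]
  exact add_one_ne_of_isSuccLimit (isSuccLimit_add_omega0_pow_succ _ d) γ

lemma add_omega0_pow_succ_inj {k j : ℕ} {β β' : Ordinal} (hk : ω ^ (k + 1) ∣ β)
    (hj : ω ^ (j + 1) ∣ β') (e : β + ω ^ (k + 1) = β' + ω ^ (j + 1)) : k = j ∧ β = β' := by
  obtain ⟨γ, rfl⟩ := hk
  obtain ⟨δ, rfl⟩ := hj
  rw [← mul_add_one, ← mul_add_one] at e
  obtain rfl : k = j := by
    by_contra hne
    rcases Nat.lt_or_gt_of_ne hne with hlt | hgt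
    · exact omega0_pow_mul_add_one_ne (by omega) γ δ e
    · exact omega0_pow_mul_add_one_ne (by omega) δ γ e.symm
  rw [mul_left_cancel_iff_of_pos (pow_pos omega0_pos _), ← succ_eq_add_one,
    ← succ_eq_add_one, succ_eq_succ_iff] at e
  exact ⟨rfl, e ▸ rfl⟩

namespace HardyRel

variable {h : ℕ → ℕ} {x y : ℕ}

lemma eq_of_zero (H : HardyRel h 0 x y) : y = x := by
  generalize hα : (0 : Ordinal) = α at H
  cases H with
  | zero => rfl
  | succ α _ _ _ => exact absurd hα.symm (add_pos_of_right zero_lt_one α).ne'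
  | top _ _ _ => exact absurd hα.symm isSuccLimit_omega0_opow_omega0.ne_zero
  | limit β k _ _ _ _ => exact absurd hα.symm (isSuccLimit_add_omega0_pow_succ β k).ne_zero

lemma of_add_one {α : Ordinal} (H : HardyRel h (α + 1) x y) : HardyRel h α (h x) y := by
  generalize hα : α + 1 = α' at H
  cases H with
  | zero => exact absurd hα (add_pos_of_right zero_lt_one α).ne'
  | succ α' _ _ H' =>
    rw [← succ_eq_add_one, ← succ_eq_add_one, succ_eq_succ_iff] at hα
    exact hα ▸ H'
  | top _ _ _ => exact absurd hα (add_one_ne_of_isSuccLimit isSuccLimit_omega0_opow_omega0 α)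
  | limit β k _ _ _ _ =>
    exact absurd hα (add_one_ne_of_isSuccLimit (isSuccLimit_add_omega0_pow_succ β k) α)

lemma of_omega0_opow_omega0 (H : HardyRel.{u} h (ω ^ ω) x y) :
    HardyRel.{u} h (ω ^ (x + 1)) x y := by
  generalize hα : ω ^ ω = α at H
  cases H with
  | zero => exact absurd hα isSuccLimit_omega0_opow_omega0.ne_zero
  | succ α _ _ _ =>
    exact absurd hα.symm (add_one_ne_of_isSuccLimit isSuccLimit_omega0_opow_omega0 α)
  | top _ _ H' => exact H'
  | limit β k _ _ _ _ => exact absurd hα.symm (add_omega0_pow_succ_ne_omega0_opow_omega0 β k)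

lemma of_add_omega0_pow_succ {β : Ordinal} {k : ℕ} (hβ : ω ^ (k + 1) ∣ β)
    (H : HardyRel h (β + ω ^ (k + 1)) x y) : HardyRel h (β + ω ^ k * (x + 1 : ℕ)) x y := by
  generalize hα : β + ω ^ (k + 1) = α at H
  cases H with
  | zero => exact absurd hα (isSuccLimit_add_omega0_pow_succ β k).ne_zero
  | succ α _ _ _ =>
    exact absurd hα.symm (add_one_ne_of_isSuccLimit (isSuccLimit_add_omega0_pow_succ β k) α)
  | top _ _ _ => exact absurd hα (add_omega0_pow_succ_ne_omega0_opow_omega0 β k)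
  | limit β' k' _ _ hβ' H' =>
    obtain ⟨rfl, rfl⟩ := add_omega0_pow_succ_inj hβ hβ' hα
    exact H'

theorem unique {α : Ordinal} {y' : ℕ} (H : HardyRel h α x y) (H' : HardyRel h α x y') :
    y = y' := by
  induction H generalizing y' with
  | zero => exact H'.eq_of_zero.symm
  | succ _ _ _ _ ih => exact ih H'.of_add_one
  | top _ _ _ ih => exact ih H'.of_omega0_opow_omega0
  | limit _ _ _ _ hβ _ ih => exact ih (H'.of_add_omega0_pow_succ hβ)

end HardyRel

def hardyOmegaPow (h : ℕ → ℕ) : ℕ → ℕ → ℕ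
  | 0 => h
  | k + 1 => fun x => (hardyOmegaPow h k)^[x + 1] x

section Realization

variable {h : ℕ → ℕ}

lemma hardyRel_add_mul_of_hardyRel_add {f : ℕ → ℕ} {δ : Ordinal}
    (hstep : ∀ β x y, δ ∣ β → HardyRel h β (f x) y → HardyRel h (β + δ) x y) (m : ℕ)
    {β : Ordinal} {x y : ℕ} (hβ : δ ∣ β) (H : HardyRel h β (f^[m] x) y) :
    HardyRel h (β + δ * m) x y := by
  induction m generalizing x with
  | zero => simpa using H
  | succ m ih =>
    rw [iterate_succ_apply] at H
    have H' := hstep _ x y (dvd_add hβ (dvd_mul_right δ m)) (ih H)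
    rwa [add_assoc, ← mul_add_one, ← Nat.cast_add_one] at H'

lemma hardyRel_add_omega0_pow_mul (k m : ℕ) {β : Ordinal} {x y : ℕ} (hβ : ω ^ k ∣ β)
    (H : HardyRel h β ((hardyOmegaPow h k)^[m] x) y) : HardyRel h (β + ω ^ k * m) x y := by
  induction k generalizing m β x y with
  | zero =>
    refine hardyRel_add_mul_of_hardyRel_add (fun β x y _ H ↦ ?_) m hβ H
    simpa using HardyRel.succ β x y H
  | succ k ih =>
    refine hardyRel_add_mul_of_hardyRel_add (fun β x y hβ H ↦ ?_) m hβ H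
    exact .limit β k x y hβ (ih (x + 1) (dvd_trans (pow_dvd_pow ω k.le_succ) hβ) H)

lemma hardyRel_omega0_pow_mul (k m x : ℕ) :
    HardyRel h (ω ^ k * m) x ((hardyOmegaPow h k)^[m] x) := by
  simpa using hardyRel_add_omega0_pow_mul k m (dvd_zero _) (.zero _)

lemma HardyRel.eq_hardyOmegaPow {k x y : ℕ} (H : HardyRel h (ω ^ k) x y) :
    y = hardyOmegaPow h k x :=
  H.unique (by simpa using hardyRel_omega0_pow_mul k 1 x)

end Realization

lemma Monotone.iterate_le_iterate {f : ℕ → ℕ} (hf : Monotone f) (hid : id ≤ f) {m n x y : ℕ}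
    (hmn : m ≤ n) (hxy : x ≤ y) : f^[m] x ≤ f^[n] y :=
  (monotone_iterate_of_id_le hid hmn x).trans (hf.iterate n hxy)

lemma iterate_le_iterate_of_le_on_Ici {f g : ℕ → ℕ} {x₀ x : ℕ} (hf : id ≤ f) (hg : Monotone g)
    (hfg : ∀ u, x₀ ≤ u → f u ≤ g u) (hx : x₀ ≤ x) (n : ℕ) : f^[n] x ≤ g^[n] x := by
  induction n with
  | zero => rfl
  | succ n ih =>
    rw [iterate_succ_apply', iterate_succ_apply']
    exact (hfg _ (hx.trans (id_le_iterate_of_id_le hf n x))).trans (hg ih)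

lemma succ_mul_le_iterate {f : ℕ → ℕ} (hf : ∀ x, 2 * x ≤ f x) (c x : ℕ) :
    (c + 1) * x ≤ f^[c] x := by
  induction c with
  | zero => simp
  | succ c ih =>
    rw [iterate_succ_apply']
    nlinarith [hf (f^[c] x)]

lemma iterate_succ_le_iterate_of_le_comp_mul {f G : ℕ → ℕ} {c x : ℕ} (hf : id ≤ f)
    (hG : Monotone G) (hGc : ∀ v, (c + 1) * v ≤ G^[c] v)
    (hfG : ∀ u, x ≤ u → f u ≤ G ((c + 1) * u)) (n : ℕ) :
    f^[n + 1] x ≤ G^[(c + 1) * n + 1] ((c + 1) * x) := by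
  induction n with
  | zero => simpa using hfG x le_rfl
  | succ n ih =>
    have hx : x ≤ f^[n + 1] x := id_le_iterate_of_id_le hf _ x
    calc f^[n + 1 + 1] x = f (f^[n + 1] x) := iterate_succ_apply' _ _ _
      _ ≤ G ((c + 1) * f^[n + 1] x) := hfG _ hx
      _ ≤ G (G^[c] (G^[(c + 1) * n + 1] ((c + 1) * x))) :=
          hG ((Nat.mul_le_mul_left _ ih).trans (hGc _))
      _ = G^[c + ((c + 1) * n + 1) + 1] ((c + 1) * x) := by
          rw [iterate_succ_apply' G (c + _), iterate_add_apply G c]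
      _ = G^[(c + 1) * (n + 1) + 1] ((c + 1) * x) := by ring_nf

section HardyOmegaPow

variable {h : ℕ → ℕ}

lemma id_le_hardyOmegaPow (hh : id ≤ h) : ∀ k, id ≤ hardyOmegaPow h k
  | 0 => hh
  | k + 1 => fun x ↦ id_le_iterate_of_id_le (id_le_hardyOmegaPow hh k) (x + 1) x

lemma hardyOmegaPow_le_hardyOmegaPow_succ (hh : id ≤ h) (k x : ℕ) :
    hardyOmegaPow h k x ≤ hardyOmegaPow h (k + 1) x :=
  monotone_iterate_of_id_le (id_le_hardyOmegaPow hh k) (Nat.le_add_left 1 x) x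

lemma monotone_hardyOmegaPow (hm : Monotone h) (hh : id ≤ h) : ∀ k, Monotone (hardyOmegaPow h k)
  | 0 => hm
  | k + 1 => fun _ _ hxy ↦ (monotone_hardyOmegaPow hm hh k).iterate_le_iterate
      (id_le_hardyOmegaPow hh k) (by omega) hxy

end HardyOmegaPow

local notation "S" => hardyOmegaPow (· + 1)

lemma id_le_succ_hardyOmegaPow (k : ℕ) : id ≤ S k :=
  id_le_hardyOmegaPow (fun n ↦ n.le_succ) k

lemma monotone_succ_hardyOmegaPow (k : ℕ) : Monotone (S k) :=
  monotone_hardyOmegaPow (fun _ _ hmn ↦ Nat.succ_le_succ hmn) (fun n ↦ n.le_succ) k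

lemma two_mul_le_succ_hardyOmegaPow {k : ℕ} (hk : 1 ≤ k) (x : ℕ) : 2 * x ≤ S k x := by
  induction k, hk using Nat.le_induction with
  | base => simp only [hardyOmegaPow, add_right_iterate, _root_.smul_eq_mul, mul_one]; omega
  | succ k _ ih => exact ih.trans (hardyOmegaPow_le_hardyOmegaPow_succ (fun n ↦ n.le_succ) k x)

section Domination

variable {h : ℕ → ℕ} {b c x₀ : ℕ}

lemma hardyOmegaPow_one_le (hh : id ≤ h) (hdom : ∀ u, x₀ ≤ u → h u ≤ (S b)^[c] u) {x : ℕ}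
    (hx₀ : x₀ ≤ x) (hcx : c ≤ x) : hardyOmegaPow h 1 x ≤ S (b + 1) ((c + 1) * x) :=
  calc hardyOmegaPow h 1 x = h^[x + 1] x := rfl
    _ ≤ ((S b)^[c])^[x + 1] x :=
        iterate_le_iterate_of_le_on_Ici hh ((monotone_succ_hardyOmegaPow b).iterate c) hdom hx₀ _
    _ = (S b)^[c * (x + 1)] x := by rw [iterate_mul]
    _ ≤ (S b)^[(c + 1) * x + 1] ((c + 1) * x) :=
        (monotone_succ_hardyOmegaPow b).iterate_le_iterate (id_le_succ_hardyOmegaPow b)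
          (by nlinarith) (by nlinarith)
    _ = S (b + 1) ((c + 1) * x) := rfl

lemma hardyOmegaPow_le (hh : id ≤ h) (hdom : ∀ u, x₀ ≤ u → h u ≤ (S b)^[c] u) {a : ℕ}
    (ha : 1 ≤ a) {x : ℕ} (hx₀ : x₀ ≤ x) (hcx : c ≤ x) :
    hardyOmegaPow h a x ≤ S (b + a) ((c + 1) * x) := by
  induction a, ha using Nat.le_induction generalizing x with
  | base => exact hardyOmegaPow_one_le hh hdom hx₀ hcx
  | succ a ha ih =>
    exact iterate_succ_le_iterate_of_le_comp_mul (id_le_hardyOmegaPow hh a)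
      (monotone_succ_hardyOmegaPow _)
      (succ_mul_le_iterate (two_mul_le_succ_hardyOmegaPow (by omega)) c)
      (fun u hu ↦ ih (hx₀.trans hu) (hcx.trans hu)) x

end Domination

theorem stmt10_general (h : ℕ → ℕ) (hinfl : ∀ x, x ≤ h x)
    (a b c x₀ : ℕ) (ha : 1 ≤ a)
    (hdom : ∀ x, x₀ ≤ x → ∀ y,
      HardyRel (fun n => n + 1) (omega0 ^ b * (c : Ordinal)) x y → h x ≤ y) :
    ∀ x, max (2 * c) x₀ ≤ x → ∀ y z, HardyRel h (omega0 ^ a) x y →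
      HardyRel (fun n => n + 1) (omega0 ^ (b + a)) ((c + 1) * x) z → y ≤ z := by
  intro x hx y z hy hz
  rw [max_le_iff] at hx
  rw [hy.eq_hardyOmegaPow, hz.eq_hardyOmegaPow]
  exact hardyOmegaPow_le hinfl (fun u hu ↦ hdom u hu _ (hardyRel_omega0_pow_mul b c u)) ha
    hx.2 (by omega)

/-- If a monotone inflationary `h` satisfies `h(x) ≤ H^(ω^b·c)(x)` for all
`x ≥ x₀` (where `H(x) = x+1`), then for all `a ≥ 1` and all
`x ≥ max(2c, x₀)` we have `h^(ω^a)(x) ≤ H^(ω^(b+a))((c+1)·x)`. -/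
theorem stmt10 (h : ℕ → ℕ) (hmono : Monotone h) (hinfl : ∀ x, x ≤ h x)
    (a b c x₀ : ℕ) (ha : 1 ≤ a) (hb : 1 ≤ b) (hc : 1 ≤ c)
    (hdom : ∀ x, x₀ ≤ x → ∀ y,
      HardyRel (fun n => n + 1) (omega0 ^ b * (c : Ordinal)) x y → h x ≤ y) :
    ∀ x, max (2 * c) x₀ ≤ x → ∀ y z, HardyRel h (omega0 ^ a) x y →
      HardyRel (fun n => n + 1) (omega0 ^ (b + a)) ((c + 1) * x) z → y ≤ z :=
  stmt10_general h hinfl a b c x₀ ha hdom
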